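/- The flash-attention style online softmax recursion is correct: maintaining running maximum m and running sum ℓ with updates m_new = max(m, m_blk), ℓ_new = e^{m - m_new}·ℓ + e^{m_blk - m_new}·ℓ_blk computes, after processing all blocks, ℓ = Σ_t exp(s_t - m) where m = max_t s_t. -/

import Mathlib

/-- One step of the flash-attention online-softmax recursion: from running statistics
`(m, ℓ)` and block statistics `(m_blk, ℓ_blk)`, compute
`m_new = max m m_blk` and `ℓ_new = e^{m - m_new} ℓ + e^{m_blk - m_new} ℓ_blk`. -/
noncomputable def onlineSoftmaxUpdate (st blk : ℝ × ℝ) : ℝ × ℝ :=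
  (max st.1 blk.1,
    Real.exp (st.1 - max st.1 blk.1) * st.2 + Real.exp (blk.1 - max st.1 blk.1) * blk.2)

/-- `p` represents the nonempty multiset `S`: `p.1` is the maximum of `S` and
`p.2 = ∑_{x ∈ S} exp (x - p.1)`. -/
def OSRep (p : ℝ × ℝ) (S : Multiset ℝ) : Prop :=
  p.1 ∈ S ∧ (∀ x ∈ S, x ≤ p.1) ∧ p.2 = (S.map (fun x => Real.exp (x - p.1))).sum

lemma osrep_update {p q : ℝ × ℝ} {S U : Multiset ℝ} (hp : OSRep p S) (hq : OSRep q U) :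
    OSRep (onlineSoftmaxUpdate p q) (S + U) := by
  obtain ⟨hpm, hpb, hps⟩ := hp
  obtain ⟨hqm, hqb, hqs⟩ := hq
  set M := max p.1 q.1 with hM
  have hfst : (onlineSoftmaxUpdate p q).1 = M := rfl
  refine ⟨?_, ?_, ?_⟩
  · rcases max_cases p.1 q.1 with ⟨h, _⟩ | ⟨h, _⟩ <;> rw [hfst, hM, h] <;>
      simp [Multiset.mem_add, hpm, hqm]
  · intro x hx
    rw [hfst]
    rcases Multiset.mem_add.mp hx with h | h
    · exact le_trans (hpb x h) (le_max_left _ _)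
    · exact le_trans (hqb x h) (le_max_right _ _)
  · show Real.exp (p.1 - M) * p.2 + Real.exp (q.1 - M) * q.2 = _
    rw [Multiset.map_add, Multiset.sum_add, hps, hqs]
    congr 1
    · rw [← Multiset.sum_map_mul_left]
      congr 1
      apply Multiset.map_congr rfl
      intro x _
      rw [hfst, ← Real.exp_add]
      ring_nf
    · rw [← Multiset.sum_map_mul_left]
      congr 1
      apply Multiset.map_congr rfl
      intro x _
      rw [hfst, ← Real.exp_add]
      ring_nf

lemma osrep_foldl {ι : Type*} (g : ι → ℝ × ℝ) (f : ι → Multiset ℝ)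
    (h : ∀ i, OSRep (g i) (f i)) :
    ∀ (L : List ι) (p : ℝ × ℝ) (S : Multiset ℝ), OSRep p S →
      OSRep ((L.map g).foldl onlineSoftmaxUpdate p) (S + (L.map f).sum) := by
  intro L
  induction L with
  | nil => intro p S hp; simpa using hp
  | cons a L ih =>
      intro p S hp
      have := ih (onlineSoftmaxUpdate p (g a)) (S + f a) (osrep_update hp (h a))
      simpa [add_assoc] using this

lemma multiset_map_finset_sum {ι : Type*} (s : Finset ι) (f : ι → Multiset ℝ) (φ : ℝ → ℝ) :
    Multiset.map φ (∑ i ∈ s, f i) = ∑ i ∈ s, Multiset.map φ (f i) :=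
  map_sum (Multiset.mapAddMonoidHom φ) f s

/-- Correctness of the online softmax recursion: processing the blocks sequentially
(with `(m, ℓ)` initialized so that the first update yields the first block's statistics)
produces `m = max_t s_t` and `ℓ = ∑_t exp(s_t - m)`. -/
theorem online_softmax_correct (B T : ℕ) (hB : 0 < B) (hT : 0 < T)
    (s : Fin B → Fin T → ℝ) :
    let mblk : Fin B → ℝ := fun i =>
      Finset.univ.sup' (Finset.univ_nonempty_iff.mpr ⟨⟨0, hT⟩⟩) (s i)
    let lblk : Fin B → ℝ := fun i => ∑ t, Real.exp (s i t - mblk i)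
    let res : ℝ × ℝ :=
      (((List.finRange B).map (fun i => (mblk i, lblk i))).tail).foldl
        onlineSoftmaxUpdate (mblk ⟨0, hB⟩, lblk ⟨0, hB⟩)
    res.1 = Finset.univ.sup' (Finset.univ_nonempty_iff.mpr ⟨(⟨0, hB⟩, ⟨0, hT⟩)⟩)
        (fun p : Fin B × Fin T => s p.1 p.2) ∧
    res.2 = ∑ p : Fin B × Fin T, Real.exp (s p.1 p.2 - res.1) := by
  intro mblk lblk res
  have hTne : (Finset.univ : Finset (Fin T)).Nonempty := Finset.univ_nonempty_iff.mpr ⟨⟨0, hT⟩⟩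
  -- block multisets
  set f : Fin B → Multiset ℝ := fun i => (Finset.univ.val.map (s i)) with hf
  have hrep : ∀ i, OSRep (mblk i, lblk i) (f i) := by
    intro i
    refine ⟨?_, ?_, ?_⟩
    · obtain ⟨t, _, ht⟩ := Finset.exists_mem_eq_sup' hTne (s i)
      simp only [hf, Multiset.mem_map]
      exact ⟨t, Finset.mem_univ_val t, ht.symm⟩
    · intro x hx
      obtain ⟨t, _, rfl⟩ := Multiset.mem_map.mp hx
      exact Finset.le_sup' (s i) (Finset.mem_univ t)
    · simp only [hf, Multiset.map_map]
      rfl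
  obtain ⟨B', rfl⟩ : ∃ B', B = B' + 1 := ⟨B - 1, (Nat.succ_pred_eq_of_pos hB).symm⟩
  have hfin : List.finRange (B' + 1) = ⟨0, hB⟩ :: (List.finRange (B' + 1)).tail := by
    rw [List.finRange_succ]
    rfl
  have hmain : OSRep res (f ⟨0, hB⟩ + (((List.finRange (B' + 1)).tail).map f).sum) := by
    have hres : res
        = (((List.finRange (B' + 1)).tail).map (fun i => (mblk i, lblk i))).foldl
            onlineSoftmaxUpdate (mblk ⟨0, hB⟩, lblk ⟨0, hB⟩) := by
      show (((List.finRange (B' + 1)).map (fun i => (mblk i, lblk i))).tail).foldl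
          onlineSoftmaxUpdate (mblk ⟨0, hB⟩, lblk ⟨0, hB⟩) = _
      rw [List.map_tail]
    rw [hres]
    exact osrep_foldl _ f hrep _ _ _ (hrep ⟨0, hB⟩)
  set Stot : Multiset ℝ := f ⟨0, hB⟩ + (((List.finRange (B' + 1)).tail).map f).sum with hStot
  have hStot' : Stot = ∑ i : Fin (B' + 1), f i := by
    rw [hStot, Finset.sum_eq_multiset_sum]
    show _ = (Multiset.map f (List.finRange (B' + 1) : Multiset (Fin (B' + 1)))).sum
    conv_rhs => rw [hfin]
    rfl
  have hmem : ∀ x, x ∈ Stot ↔ ∃ p : Fin (B' + 1) × Fin T, s p.1 p.2 = x := by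
    intro x
    rw [hStot', Multiset.mem_sum]
    constructor
    · rintro ⟨i, -, hxm⟩
      obtain ⟨t, _, rfl⟩ := Multiset.mem_map.mp hxm
      exact ⟨(i, t), rfl⟩
    · rintro ⟨⟨i, t⟩, rfl⟩
      exact ⟨i, Finset.mem_univ i, Multiset.mem_map.mpr ⟨t, Finset.mem_univ_val t, rfl⟩⟩
  obtain ⟨hm1, hm2, hm3⟩ := hmain
  have hres1 : res.1 = Finset.univ.sup' (Finset.univ_nonempty_iff.mpr ⟨(⟨0, hB⟩, ⟨0, hT⟩)⟩)
      (fun p : Fin (B' + 1) × Fin T => s p.1 p.2) := by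
    apply le_antisymm
    · obtain ⟨p, hp⟩ := (hmem res.1).mp hm1
      rw [← hp]
      exact Finset.le_sup' (fun q : Fin (B' + 1) × Fin T => s q.1 q.2) (Finset.mem_univ p)
    · apply Finset.sup'_le
      intro p _
      exact hm2 _ ((hmem _).mpr ⟨p, rfl⟩)
  refine ⟨hres1, ?_⟩
  rw [show (res.2 : ℝ) = _ from hm3, show (Stot : Multiset ℝ) = _ from rfl] at *
  rw [hm3, hStot', multiset_map_finset_sum, Fintype.sum_prod_type]
  rw [Multiset.sum_sum]
  apply Finset.sum_congr rfl
  intro i _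
  simp only [hf, Multiset.map_map]
  rfl
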